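/- Let a : ℕ → α be a sequence in the class 𝒞 and let P_a(n) denote the palindromic length of its prefix of length n. Then for every k ≥ 0: P_a(4k+2) ≥ P_a(4k+4) + 1, P_a(4k+3) ≥ P_a(4k+4) + 1, and P_a(4k+1) ≥ P_a(4k+4). -/

import Mathlib

/-- Membership in the class 𝒞: there exist a letter `c`, bijections `f n`,
and words `w n` with `w 0 = [c]`,
`w (n+1) = w n ++ f n (w n) ++ f n (w n) ++ w n`, `f n (w n) ≠ w n`,
and `w n` is the prefix of `a` of length `4 ^ n`. -/
def InC {α : Type*} (a : ℕ → α) : Prop :=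
  ∃ (c : α) (f : ℕ → α ≃ α) (w : ℕ → List α),
    w 0 = [c] ∧
    (∀ n, w (n + 1) = w n ++ (w n).map (f n) ++ (w n).map (f n) ++ w n) ∧
    (∀ n, (w n).map (f n) ≠ w n) ∧
    (∀ n, w n = (List.range (4 ^ n)).map a)

/-- The factor `a(x) a(x+1) ⋯ a(x+y-1)` of the sequence `a`. -/
def factor {α : Type*} (a : ℕ → α) (x y : ℕ) : List α :=
  (List.range y).map (fun i => a (x + i))

/-- The prefix of `a` of length `n`. -/
def prefixWord {α : Type*} (a : ℕ → α) (n : ℕ) : List α :=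
  factor a 0 n

/-- The palindromic length of a finite word: the least number of palindromes
whose concatenation is the word (0 for the empty word). -/
noncomputable def palLen {α : Type*} (w : List α) : ℕ :=
  sInf {k | ∃ ps : List (List α),
    ps.length = k ∧ (∀ p ∈ ps, p.Palindrome) ∧ ps.flatten = w}

/-- `P a n` is the palindromic length of the prefix of `a` of length `n`. -/
noncomputable def P {α : Type*} (a : ℕ → α) (n : ℕ) : ℕ :=
  palLen (prefixWord a n)

/-- The factor of length `y` at position `x` is embedded into the center of the
factor of length `4 * r` at position `4 * z`. -/
def EmbedCenter (x y z r : ℕ) : Prop :=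
  4 * z ≤ x ∧ x + y ≤ 4 * z + 4 * r ∧ x - 4 * z = (4 * z + 4 * r) - (x + y)

/-- The Thue–Morse sequence: `true` iff the number of ones in the binary
expansion is odd. -/
def thueMorse (n : ℕ) : Bool :=
  (Nat.digits 2 n).count 1 % 2 == 1

/-!
Membership in `𝒞` forces `a` to be a concatenation of blocks `xyyx` with `x ≠ y`: `w (n+1)` is made
of four copies of `w n` up to injective relabelling, and `w 1 = c (f c) (f c) c`. In such a
sequence every palindrome of length `2` or `≥ 4` is centred at a block boundary or at a block
centre, hence can be widened to a palindrome made of whole blocks. Now take the last palindrome of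
an optimal factorisation of a prefix ending strictly inside a block: widening it and using strong
induction on the length shows `P a e < P a N` whenever `4 ∣ e` and `0 < |N - e| ≤ 2`.
-/

section

variable {α : Type*}

theorem exists_palindromes_length_palLen (w : List α) :
    ∃ ps : List (List α), ps.length = palLen w ∧ (∀ p ∈ ps, p.Palindrome) ∧ ps.flatten = w :=
  Nat.sInf_mem (s := {k | ∃ ps : List (List α), ps.length = k ∧ (∀ p ∈ ps, p.Palindrome) ∧
    ps.flatten = w}) ⟨w.length, w.map ([·]), List.length_map _,
      by simp [List.Palindrome.singleton], by induction w <;> simp_all⟩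

theorem palLen_le_length {w : List α} (ps : List (List α)) (hps : ∀ p ∈ ps, p.Palindrome)
    (hw : ps.flatten = w) : palLen w ≤ ps.length :=
  Nat.sInf_le ⟨ps, rfl, hps, hw⟩

theorem palLen_append_le (u : List α) {v : List α} (hv : v.Palindrome) :
    palLen (u ++ v) ≤ palLen u + 1 := by
  obtain ⟨ps, hlen, hps, rfl⟩ := exists_palindromes_length_palLen u
  calc palLen (ps.flatten ++ v) ≤ (ps ++ [v]).length :=
        palLen_le_length _ (by simpa [or_imp, forall_and] using ⟨hps, hv⟩) (by simp)
    _ = palLen ps.flatten + 1 := by simp [hlen]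

theorem exists_eq_append_palindrome_palLen_lt {w : List α} (hw : w ≠ []) :
    ∃ u v, w = u ++ v ∧ v ≠ [] ∧ v.Palindrome ∧ palLen u < palLen w := by
  obtain ⟨ps, hlen, hps, rfl⟩ := exists_palindromes_length_palLen w
  obtain rfl | ⟨rs, v, rfl⟩ := ps.eq_nil_or_concat'
  · simp at hw
  simp only [List.mem_append, List.mem_singleton, or_imp, forall_and, forall_eq] at hps
  simp only [List.length_append, List.length_singleton, List.flatten_append,
    List.flatten_cons, List.flatten_nil, List.append_nil] at hlen ⊢
  have hrs : palLen rs.flatten ≤ rs.length := palLen_le_length rs hps.1 rfl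
  refine ⟨rs.flatten, v, rfl, ?_, hps.2, by omega⟩
  rintro rfl
  have := palLen_le_length rs hps.1 (w := rs.flatten ++ []) (by simp)
  omega

def IsPalindromicFactor (a : ℕ → α) (x y : ℕ) : Prop :=
  ∀ i j, x ≤ i → x ≤ j → i + j + 1 = 2 * x + y → a i = a j

theorem factor_length (a : ℕ → α) (x y : ℕ) : (factor a x y).length = y := by
  simp [factor]

theorem factor_add (a : ℕ → α) (x y z : ℕ) :
    factor a x (y + z) = factor a x y ++ factor a (x + y) z := by
  simp only [factor, List.range_add, List.map_append, List.map_map]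
  congr 2
  ext i
  simp [Nat.add_assoc]

theorem prefixWord_add (a : ℕ → α) (x y : ℕ) :
    prefixWord a (x + y) = prefixWord a x ++ factor a x y := by
  rw [prefixWord, prefixWord, factor_add, Nat.zero_add]

theorem palindrome_factor_iff (a : ℕ → α) (x y : ℕ) :
    (factor a x y).Palindrome ↔ IsPalindromicFactor a x y := by
  simp only [List.Palindrome.iff_reverse_eq, List.ext_getElem_iff, List.length_reverse,
    List.getElem_reverse, factor, List.getElem_map, List.getElem_range, List.length_map,
    List.length_range, true_and]
  constructor
  · intro h i j hi hj hij
    simpa [show x + (y - 1 - (j - x)) = i by omega, show x + (j - x) = j by omega]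
      using h (j - x) (by omega) (by omega)
  · intro h i hi _
    exact h _ _ (by omega) (by omega) (by omega)

theorem IsPalindromicFactor.shrink {a : ℕ → α} {x y x' y' : ℕ} (h : IsPalindromicFactor a x y)
    (hx : x ≤ x') (hc : 2 * x' + y' = 2 * x + y) : IsPalindromicFactor a x' y' :=
  fun i j hi hj hij => h i j (by omega) (by omega) (by omega)

theorem P_add_le_of_isPalindromicFactor {a : ℕ → α} {x y : ℕ}
    (h : IsPalindromicFactor a x y) : P a (x + y) ≤ P a x + 1 := by
  rw [P, P, prefixWord_add]
  exact palLen_append_le _ ((palindrome_factor_iff a x y).2 h)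

theorem exists_isPalindromicFactor_P_lt (a : ℕ → α) {N : ℕ} (hN : 0 < N) :
    ∃ x y, x + y = N ∧ 0 < y ∧ IsPalindromicFactor a x y ∧ P a x < P a N := by
  have hne : prefixWord a N ≠ [] := by
    rw [← List.length_pos_iff, prefixWord, factor_length]; exact hN
  obtain ⟨u, v, huv, hv, hvpal, hle⟩ := exists_eq_append_palindrome_palLen_lt hne
  have hx : u.length ≤ N := by
    simpa [prefixWord, factor_length] using congrArg (List.length ∘ List.take u.length) huv
  have hsplit := prefixWord_add a u.length (N - u.length)
  rw [Nat.add_sub_cancel' hx, huv] at hsplit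
  obtain ⟨hu, rfl⟩ := List.append_inj hsplit (by simp [prefixWord, factor_length])
  refine ⟨u.length, N - u.length, by omega, ?_, (palindrome_factor_iff _ _ _).1 hvpal, ?_⟩
  · rw [← List.length_pos_iff, factor_length] at hv
    omega
  · rwa [P, P, ← hu]

def IsXYYXBlock (a : ℕ → α) (q : ℕ) : Prop :=
  a (4 * q + 3) = a (4 * q) ∧ a (4 * q + 2) = a (4 * q + 1) ∧ a (4 * q + 1) ≠ a (4 * q)

structure IsXYYXBlocked (a : ℕ → α) : Prop where
  block : ∀ q, IsXYYXBlock a q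

theorem IsXYYXBlock.of_apply_eq {a : ℕ → α} {g : α → α} (hg : Function.Injective g)
    {q r : ℕ} (h : ∀ j < 4, a (4 * q + j) = g (a (4 * r + j))) (hr : IsXYYXBlock a r) :
    IsXYYXBlock a q := by
  obtain ⟨h3, h2, h1⟩ := hr
  have h0 := h 0 (by norm_num)
  simp only [Nat.add_zero] at h0
  refine ⟨?_, ?_, ?_⟩
  · rw [h 3 (by norm_num), h3, h0]
  · rw [h 2 (by norm_num), h2, h 1 (by norm_num)]
  · rw [h 1 (by norm_num), h0]
    exact hg.ne h1

theorem apply_quarters_of_map_range_eq {a : ℕ → α} {g : α → α} {N : ℕ}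
    (h : (List.range (4 * N)).map a = (List.range N).map a ++ ((List.range N).map a).map g ++
      ((List.range N).map a).map g ++ (List.range N).map a) (i : ℕ) (hi : i < N) :
    a (N + i) = g (a i) ∧ a (2 * N + i) = g (a i) ∧ a (3 * N + i) = a i := by
  have h' (j : ℕ) := congrArg (·[j]?) h
  simp only [List.getElem?_map, List.getElem?_append, List.length_append, List.length_map,
    List.length_range] at h'
  refine ⟨?_, ?_, ?_⟩ <;> [have := h' (N + i); have := h' (2 * N + i); have := h' (3 * N + i)] <;>
    simpa (disch := omega) [List.getElem?_range, two_mul, show 3 * N = N + N + N by ring, hi,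
      show N + i < N + N + N by omega]
      using this

theorem InC.isXYYXBlocked {a : ℕ → α} (hC : InC a) : IsXYYXBlocked a := by
  obtain ⟨-, f, w, -, hrec, hne, hpre⟩ := hC
  have quarters (n : ℕ) := apply_quarters_of_map_range_eq (g := f n) (N := 4 ^ n)
    (by rw [← pow_succ', ← hpre, ← hpre, hrec])
  have block0 : IsXYYXBlock a 0 := by
    obtain ⟨h1, h2, h3⟩ := quarters 0 0 (by norm_num)
    have := hne 0
    simp only [hpre, pow_zero, List.range_one, List.map_cons, List.map_nil, ne_eq,
      List.cons.injEq, and_true] at this h1 h2 h3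
    refine ⟨h3, h2.trans h1.symm, h1 ▸ this⟩
  have blocks (n : ℕ) : ∀ q < 4 ^ n, IsXYYXBlock a q := by
    induction n with
    | zero =>
      intro q hq
      obtain rfl : q = 0 := by simpa using hq
      exact block0
    | succ n ih =>
      intro q hq
      have hpow : 4 ^ (n + 1) = 4 * 4 ^ n := pow_succ' 4 n
      rcases (by omega : q < 4 ^ n ∨ 4 ^ n ≤ q ∧ q < 2 * 4 ^ n ∨
          2 * 4 ^ n ≤ q ∧ q < 3 * 4 ^ n ∨ 3 * 4 ^ n ≤ q) with h | h | h | h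
      · exact ih q h
      · refine (ih (q - 4 ^ n) (by omega)).of_apply_eq (f (n + 1)).injective fun j hj => ?_
        rw [← (quarters (n + 1) (4 * (q - 4 ^ n) + j) (by omega)).1]
        congr 1; omega
      · refine (ih (q - 2 * 4 ^ n) (by omega)).of_apply_eq (f (n + 1)).injective fun j hj => ?_
        rw [← (quarters (n + 1) (4 * (q - 2 * 4 ^ n) + j) (by omega)).2.1]
        congr 1; omega
      · refine (ih (q - 3 * 4 ^ n) (by omega)).of_apply_eq Function.injective_id fun j hj => ?_
        rw [id, ← (quarters (n + 1) (4 * (q - 3 * 4 ^ n) + j) (by omega)).2.2]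
        congr 1; omega
  exact ⟨fun q => blocks q q (Nat.lt_pow_self (by norm_num))⟩

namespace IsXYYXBlocked

variable {a : ℕ → α}

theorem apply_eq_of_outer (ha : IsXYYXBlocked a) {i : ℕ} (hi : i % 4 = 0 ∨ i % 4 = 3) :
    a i = a (4 * (i / 4)) := by
  obtain ⟨h3, -, -⟩ := ha.block (i / 4)
  rcases hi with hi | hi
  · rw [← Nat.div_add_mod i 4, hi, Nat.add_zero, Nat.mul_div_cancel_left _ (by norm_num)]
  · rw [← h3]; congr 1; omega

theorem apply_eq_of_inner (ha : IsXYYXBlocked a) {i : ℕ} (hi : i % 4 = 1 ∨ i % 4 = 2) :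
    a i = a (4 * (i / 4) + 1) := by
  obtain ⟨-, h2, -⟩ := ha.block (i / 4)
  rcases hi with hi | hi
  · congr 1; omega
  · rw [← h2]; congr 1; omega

theorem apply_eq_apply_iff (ha : IsXYYXBlocked a) {i j : ℕ} (hij : i / 4 = j / 4) :
    a i = a j ↔ (i % 4 = 0 ∨ i % 4 = 3 ↔ j % 4 = 0 ∨ j % 4 = 3) := by
  have hne := (ha.block (j / 4)).2.2
  by_cases hi : i % 4 = 0 ∨ i % 4 = 3 <;> by_cases hj : j % 4 = 0 ∨ j % 4 = 3
  · simp only [hi, hj, iff_true]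
    rw [ha.apply_eq_of_outer hi, ha.apply_eq_of_outer hj, hij]
  · simp only [hi, hj, iff_false, not_true_eq_false]
    rw [ha.apply_eq_of_outer hi, ha.apply_eq_of_inner (i := j) (by omega), hij]
    exact hne.symm
  · simp only [hi, hj, false_iff, not_true_eq_false]
    rw [ha.apply_eq_of_inner (by omega), ha.apply_eq_of_outer hj, hij]
    exact iff_false_intro hne
  · simp only [hi, hj, iff_self, iff_true]
    rw [ha.apply_eq_of_inner (by omega), ha.apply_eq_of_inner (i := j) (by omega), hij]

theorem apply_eq_apply (ha : IsXYYXBlocked a) {i j : ℕ} (hij : i / 4 = j / 4)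
    (hout : i % 4 = 0 ∨ i % 4 = 3 ↔ j % 4 = 0 ∨ j % 4 = 3) : a i = a j :=
  (ha.apply_eq_apply_iff hij).2 hout

theorem apply_ne_apply (ha : IsXYYXBlocked a) {i j : ℕ} (hij : i / 4 = j / 4)
    (hout : ¬ (i % 4 = 0 ∨ i % 4 = 3 ↔ j % 4 = 0 ∨ j % 4 = 3)) : a i ≠ a j :=
  fun h => hout ((ha.apply_eq_apply_iff hij).1 h)

theorem isPalindromicFactor_block (ha : IsXYYXBlocked a) (q : ℕ) :
    IsPalindromicFactor a (4 * q) 4 :=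
  fun _ _ _ _ _ => ha.apply_eq_apply (by omega) (by omega)

theorem odd_of_isPalindromicFactor_two (ha : IsXYYXBlocked a) {x : ℕ}
    (hp : IsPalindromicFactor a x 2) : x % 2 = 1 := by
  by_contra hx
  exact ha.apply_ne_apply (i := x) (j := x + 1) (by omega) (by omega)
    (hp _ _ le_rfl (by omega) (by omega))

theorem mod_four_of_isPalindromicFactor_three (ha : IsXYYXBlocked a) {x : ℕ}
    (hp : IsPalindromicFactor a x 3) : x % 4 = 2 ∨ x % 4 = 3 := by
  by_contra hx
  have hx2 : a x = a (x + 2) := hp _ _ le_rfl (by omega) (by omega)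
  rcases (by omega : x % 4 = 0 ∨ x % 4 = 1) with h | h
  · exact ha.apply_ne_apply (i := x) (j := x + 1) (by omega) (by omega)
      (hx2.trans (ha.apply_eq_apply (by omega) (by omega)))
  · exact ha.apply_ne_apply (i := x + 2) (j := x) (by omega) (by omega) hx2.symm

theorem not_isPalindromicFactor_five (ha : IsXYYXBlocked a) {x : ℕ} :
    ¬ IsPalindromicFactor a x 5 := by
  intro hp
  have h04 : a x = a (x + 4) := hp _ _ le_rfl (by omega) (by omega)
  have h13 : a (x + 1) = a (x + 3) := hp _ _ (by omega) (by omega) (by omega)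
  have hmid := hp.shrink (x' := x + 1) (y' := 3) (by omega) (by omega)
  rcases ha.mod_four_of_isPalindromicFactor_three hmid with h | h
  · apply ha.apply_ne_apply (i := x + 3) (j := x + 4) (by omega) (by omega)
    rw [← h13, ← h04]
    exact ha.apply_eq_apply (by omega) (by omega)
  · apply ha.apply_ne_apply (i := x + 1) (j := x) (by omega) (by omega)
    rw [h13, h04]
    exact ha.apply_eq_apply (by omega) (by omega)

/-- `2 * x + y` is twice the centre of the factor plus one, so `4 ∣ 2 * x + y` says that the centre
is a block boundary or a block centre. -/
theorem four_dvd_of_isPalindromicFactor (ha : IsXYYXBlocked a) {x y : ℕ}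
    (hp : IsPalindromicFactor a x y) (hy : 2 ≤ y) (hy3 : y ≠ 3) : 4 ∣ 2 * x + y := by
  obtain ⟨d, rfl | rfl⟩ : ∃ d, y = 2 * d + 2 ∨ y = 2 * d + 5 := by
    rcases Nat.even_or_odd y with h | h
    exacts [⟨(y - 2) / 2, by grind⟩, ⟨(y - 5) / 2, by grind⟩]
  · have := ha.odd_of_isPalindromicFactor_two
      (hp.shrink (x' := x + d) (y' := 2) (by omega) (by omega))
    omega
  · exact (ha.not_isPalindromicFactor_five
      (hp.shrink (x' := x + d) (y' := 5) (by omega) (by omega))).elim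

theorem isPalindromicFactor_four_mul (ha : IsXYYXBlocked a) {x y m e : ℕ}
    (hp : IsPalindromicFactor a x y) (hx : x ≤ 4 * m + 2) (he : 4 ∣ e)
    (hc : 2 * x + y = 4 * m + e) : IsPalindromicFactor a (4 * m) (e - 4 * m) := by
  intro i j hi hj hij
  wlog hle : i ≤ j generalizing i j
  · exact (this j i hj hi (by omega) (by omega)).symm
  by_cases hxi : x ≤ i
  · exact hp i j hxi (by omega) (by omega)
  by_cases hj : j < 4 * m + 4
  · exact ha.apply_eq_apply (by omega) (by omega)
  -- Reflecting `i` and `j` inside their blocks keeps the letters and, as the centre is a block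
  -- boundary or centre, keeps them mirror to each other, while moving both to the right of `x`.
  calc a i = a (8 * m + 3 - i) := ha.apply_eq_apply (by omega) (by omega)
    _ = a (2 * e - 5 - j) := hp _ _ (by omega) (by omega) (by omega)
    _ = a j := ha.apply_eq_apply (by omega) (by omega)

theorem P_le_P_four_mul_add_one (ha : IsXYYXBlocked a) {x y m e : ℕ}
    (hp : IsPalindromicFactor a x y) (hx : x ≤ 4 * m + 2) (he : 4 ∣ e)
    (hc : 2 * x + y = 4 * m + e) (hme : 4 * m ≤ e) : P a e ≤ P a (4 * m) + 1 := by
  have := P_add_le_of_isPalindromicFactor (ha.isPalindromicFactor_four_mul hp hx he hc)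
  rwa [Nat.add_sub_cancel' hme] at this

end IsXYYXBlocked

def ExceedsLeftBoundary (a : ℕ → α) (N : ℕ) : Prop :=
  ∀ e, 4 ∣ e → N = e + 1 ∨ N = e + 2 → P a e + 1 ≤ P a N

def ExceedsRightBoundary (a : ℕ → α) (N : ℕ) : Prop :=
  ∀ e, 4 ∣ e → N + 1 = e ∨ N + 2 = e → P a e + 1 ≤ P a N

namespace IsXYYXBlocked

variable {a : ℕ → α}

theorem exceedsLeftBoundary_add (ha : IsXYYXBlocked a) {x y : ℕ}
    (hp : IsPalindromicFactor a x y) (hy : 0 < y) (hPx : P a x < P a (x + y))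
    (hl : ExceedsLeftBoundary a x) (hr : ExceedsRightBoundary a x) :
    ExceedsLeftBoundary a (x + y) := by
  intro e he hN
  suffices P a e ≤ P a x by omega
  rcases (by omega : y = 1 ∨ y = 3 ∨ (2 ≤ y ∧ y ≠ 3)) with rfl | rfl | ⟨hy2, hy3⟩
  · rcases hN with hN | hN
    · obtain rfl : x = e := by omega
      exact le_rfl
    · have := hl e he (by omega)
      omega
  · have := hr e he (by omega)
    omega
  · have := ha.four_dvd_of_isPalindromicFactor hp hy2 hy3
    have h1 := ha.P_le_P_four_mul_add_one hp (m := (x + 2) / 4) (by omega) he (by omega)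
      (by omega)
    have h2 := hr (4 * ((x + 2) / 4)) (by omega) (by omega)
    omega

theorem exceedsRightBoundary_add (ha : IsXYYXBlocked a) {x y : ℕ}
    (hp : IsPalindromicFactor a x y) (hy : 0 < y) (hPx : P a x < P a (x + y))
    (hl : ExceedsLeftBoundary a x) (hr : ExceedsRightBoundary a x) :
    ExceedsRightBoundary a (x + y) := by
  intro e he hN
  suffices P a e ≤ P a x by omega
  have hblock := ha.P_le_P_four_mul_add_one (ha.isPalindromicFactor_block (e / 4 - 1))
    (m := e / 4 - 1) (by omega) he (by omega) (by omega)
  rcases (by omega : y = 1 ∨ y = 3 ∨ (2 ≤ y ∧ y ≠ 3)) with rfl | rfl | ⟨hy2, hy3⟩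
  · rcases hN with hN | hN
    · have := hr e he (by omega)
      omega
    · have := hl (4 * (e / 4 - 1)) (by omega) (by omega)
      omega
  · rcases hN with hN | hN
    · have := ha.mod_four_of_isPalindromicFactor_three hp
      omega
    · have := hr (4 * (e / 4 - 1)) (by omega) (by omega)
      omega
  · have := ha.four_dvd_of_isPalindromicFactor hp hy2 hy3
    have h1 := ha.P_le_P_four_mul_add_one hp (m := x / 4) (by omega) he (by omega) (by omega)
    have h2 := hl (4 * (x / 4)) (by omega) (by omega)
    omega

theorem exceedsBoundaries (ha : IsXYYXBlocked a) (N : ℕ) :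
    ExceedsLeftBoundary a N ∧ ExceedsRightBoundary a N := by
  induction N using Nat.strong_induction_on with
  | _ N ih =>
  rcases Nat.eq_zero_or_pos N with rfl | hN
  · exact ⟨fun _ _ _ => by omega, fun _ _ _ => by omega⟩
  obtain ⟨x, y, rfl, hy, hp, hPx⟩ := exists_isPalindromicFactor_P_lt a hN
  obtain ⟨hl, hr⟩ := ih x (by omega)
  exact ⟨ha.exceedsLeftBoundary_add hp hy hPx hl hr, ha.exceedsRightBoundary_add hp hy hPx hl hr⟩

end IsXYYXBlocked

end

theorem stmt5 {α : Type*} (a : ℕ → α) (hC : InC a) (k : ℕ) :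
    P a (4 * k + 2) ≥ P a (4 * k + 4) + 1 ∧
    P a (4 * k + 3) ≥ P a (4 * k + 4) + 1 ∧
    P a (4 * k + 1) ≥ P a (4 * k + 4) := by
  have ha := hC.isXYYXBlocked
  have hblock := P_add_le_of_isPalindromicFactor (ha.isPalindromicFactor_block k)
  have hleft1 := (ha.exceedsBoundaries (4 * k + 1)).1 (4 * k) (by omega) (by omega)
  have hright2 := (ha.exceedsBoundaries (4 * k + 2)).2 (4 * k + 4) (by omega) (by omega)
  have hright3 := (ha.exceedsBoundaries (4 * k + 3)).2 (4 * k + 4) (by omega) (by omega)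
  exact ⟨hright2, hright3, by omega⟩
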